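/- Let F be a free group and C = ⟨x⟩ the cyclic subgroup generated by a free basis element x. Then C is square-root closed in F: if g ∈ F and g² ∈ C, then g ∈ C. -/

import Mathlib

/-!
If `g ^ 2 = a ^ k` with `k ≠ 0`, then `g` commutes with `a ^ k`, so `g a g⁻¹` is a `k`-th root
of `a ^ k`; roots are unique in the torsion-free group `FreeGroup α`, hence `g` commutes with `a`.
The centralizer of a generator `a` is `⟨a⟩`: trailing letters `a^±1` of the reduced word of `g`
can be peeled off, and if the last letter involves another generator then `g a g⁻¹` is reduced
as written, so it is longer than `a`.
-/

theorem Commute.of_zpow_right {G : Type*} [Group G] [IsMulTorsionFree G] {g a : G} {n : ℤ}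
    (hn : n ≠ 0) (h : Commute g (a ^ n)) : Commute g a := by
  have hconj : (g * a * g⁻¹) ^ n = a ^ n := by
    rw [conj_zpow, h.eq, mul_inv_cancel_right]
  rw [commute_iff_eq, ← mul_inv_eq_iff_eq_mul, zpow_left_injective hn hconj]

namespace FreeGroup

variable {α : Type*}

theorem IsReduced.append {L₁ L₂ : List (α × Bool)} (h₁ : IsReduced L₁) (h₂ : IsReduced L₂)
    (h : ∀ x ∈ L₁.getLast?, ∀ y ∈ L₂.head?, x.1 ≠ y.1) : IsReduced (L₁ ++ L₂) :=
  List.isChain_append.2 ⟨h₁, h₂, fun x hx y hy hxy => absurd hxy (h x hx y hy)⟩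

theorem head?_invRev (L : List (α × Bool)) :
    (invRev L).head? = L.getLast?.map fun x => (x.1, !x.2) := by
  simp [invRev, List.head?_reverse, List.getLast?_map]

theorem mk_singleton_mem_zpowers (a : α) (b : Bool) : mk [(a, b)] ∈ Subgroup.zpowers (of a) := by
  cases b
  · exact inv_mem_iff.1 (by rw [inv_mk]; exact Subgroup.mem_zpowers _)
  · exact Subgroup.mem_zpowers _

theorem not_commute_of_of_mem_getLast? [DecidableEq α] {a : α} {g : FreeGroup α} {x : α × Bool}
    (hx : x ∈ g.toWord.getLast?) (hxa : x.1 ≠ a) : ¬ Commute g (of a) := by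
  intro h
  have hred : IsReduced (g.toWord ++ [(a, true)] ++ invRev g.toWord) := by
    refine (isReduced_toWord.append .singleton ?_).append ?_ ?_
    · intro y hy z hz
      rw [List.head?_cons, Option.mem_some_iff] at hz
      rw [Option.mem_unique hy hx, ← hz]
      exact hxa
    · rw [← toWord_inv]; exact isReduced_toWord
    · intro y hy z hz
      rw [List.getLast?_concat, ← Option.mem_some_iff.1 hy] at *
      rw [head?_invRev, Option.mem_map] at hz
      obtain ⟨x', hx', rfl⟩ := hz
      rw [Option.mem_unique hx' hx]
      exact hxa.symm
  have hconj : mk (g.toWord ++ [(a, true)] ++ invRev g.toWord) = of a := by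
    rw [← mul_mk, ← mul_mk, ← inv_mk, mk_toWord, ← of, h.eq, mul_inv_cancel_right]
  have hlen := congrArg List.length (congrArg toWord hconj)
  rw [toWord_mk, hred.reduce_eq, toWord_of] at hlen
  simp only [List.length_append, invRev_length, List.length_cons, List.length_nil] at hlen
  have hnil : g.toWord = [] := List.eq_nil_of_length_eq_zero (by omega)
  simp [hnil] at hx

theorem mem_zpowers_of_commute_of {a : α} {g : FreeGroup α} (h : Commute g (of a)) :
    g ∈ Subgroup.zpowers (of a) := by
  classical
  induction hw : g.toWord using List.reverseRecOn generalizing g with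
  | nil => simp [toWord_eq_nil_iff.1 hw]
  | append_singleton L x ih =>
    obtain ⟨b, s⟩ := x
    obtain rfl : a = b := by
      by_contra hba
      exact not_commute_of_of_mem_getLast? (x := (b, s)) (by simp [hw]) (Ne.symm hba) h
    have hg : g = mk L * mk [(a, s)] := by rw [mul_mk, ← hw, mk_toWord]
    have hL : (mk L).toWord = L := by
      rw [toWord_mk, IsReduced.reduce_eq]
      exact isReduced_toWord.infix (by rw [hw]; exact (List.prefix_append L _).isInfix)
    obtain ⟨n, hn⟩ := mk_singleton_mem_zpowers a s
    have hLa : Commute (mk L) (of a) := by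
      rw [← mul_inv_cancel_right (mk L) (mk [(a, s)]), ← hg, ← hn]
      exact h.mul_left ((Commute.refl _).zpow_left n).inv_left
    rw [hg]
    exact mul_mem (ih hLa hL) ⟨n, hn⟩

end FreeGroup

/-- Let `F` be a free group and `C = ⟨x⟩` the cyclic subgroup generated by a
free basis element `x`.  Then `C` is square-root closed in `F`: if `g ∈ F` and `g² ∈ C`,
then `g ∈ C`. -/
theorem cyclic_on_basis_element_squareRootClosed
    {α : Type*} (a : α) (g : FreeGroup α)
    (h : g ^ 2 ∈ Subgroup.zpowers (FreeGroup.of a)) :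
    g ∈ Subgroup.zpowers (FreeGroup.of a) := by
  obtain ⟨k, hk⟩ := Subgroup.mem_zpowers_iff.1 h
  rcases eq_or_ne k 0 with rfl | hk0
  · rw [zpow_zero, eq_comm, sq_eq_one] at hk
    exact hk ▸ one_mem _
  · have hcomm : Commute g (FreeGroup.of a ^ k) := hk ▸ (Commute.refl g).pow_right 2
    exact FreeGroup.mem_zpowers_of_commute_of (hcomm.of_zpow_right hk0)
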